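/- The quadratically regularized median of equal weights is asymptotically correct: if (ξ_n) is a real sequence converging to 0 and x ∈ ℝ, then for every ε > 0 there exists N₀ such that the quadratically regularized median of the values (x + ξ_1, …, x + ξ_{N₀}) with unit weights lies within ε of x. -/

import Mathlib

open Filter

/-- Objective of the quadratically regularized median with unit weights. -/
noncomputable def qrObjUnit (L : ℝ) {N : ℕ} (y : Fin N → ℝ) (z : ℝ) : ℝ :=
  z ^ 2 / (2 * L) + ∑ n, |z - y n|

/-!
Moving the argument from `c` up to `q > c` increases each term `|z - yₙ|` with `yₙ ≤ c` by
exactly `q - c` and decreases every other term by at most `q - c`, while the quadratic term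
changes by `(q - c)(q + c)/(2L)`. So once the points above `c` are few enough compared with
those below, `c` beats every `q > c`, and a minimizer lies below `c`; the lower bound follows
by reflection `z ↦ -z`. Since `ξₙ → 0`, all but finitely many of the points `x + ξₙ` lie in
`(x - ε, x + ε]`, which wins both counts once `N₀` is large.
-/

open Finset

section Objective

variable {L : ℝ} {N : ℕ} (y : Fin N → ℝ)

lemma qrObjUnit_neg (z : ℝ) : qrObjUnit L (fun n => -y n) (-z) = qrObjUnit L y z := by
  unfold qrObjUnit
  congr 1
  · ring
  · refine sum_congr rfl fun n _ => ?_
    rw [show -z - -y n = -(z - y n) by ring, abs_neg]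

lemma sub_mul_le_abs_sub_sub_abs_sub {c q : ℝ} (hcq : c ≤ q) (a : ℝ) :
    (q - c) * (1 - 2 * if c < a then 1 else 0) ≤ |q - a| - |c - a| := by
  split_ifs with hca
  · have h := abs_sub_abs_le_abs_sub (c - a) (q - a)
    rw [show c - a - (q - a) = -(q - c) by ring, abs_neg, abs_of_nonneg (sub_nonneg.2 hcq)] at h
    linarith
  · rw [abs_of_nonneg (by linarith), abs_of_nonneg (by linarith)]
    linarith

lemma sub_mul_le_qrObjUnit_sub {c q : ℝ} (hcq : c ≤ q) :
    (q - c) * ((q + c) / (2 * L) + N - 2 * #{n | c < y n}) ≤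
      qrObjUnit L y q - qrObjUnit L y c := by
  have hsum : (q - c) * (N - 2 * #{n | c < y n}) ≤ ∑ n, (|q - y n| - |c - y n|) := by
    calc (q - c) * (N - 2 * #{n | c < y n})
        = ∑ n, (q - c) * (1 - 2 * if c < y n then 1 else 0) := by
          rw [← mul_sum, sum_sub_distrib, ← mul_sum, sum_boole]
          simp
      _ ≤ _ := sum_le_sum fun n _ => sub_mul_le_abs_sub_sub_abs_sub hcq (y n)
  have hquad : q ^ 2 / (2 * L) - c ^ 2 / (2 * L) = (q - c) * ((q + c) / (2 * L)) := by ring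
  unfold qrObjUnit
  rw [sum_sub_distrib] at hsum
  linarith

lemma qrMinimizer_le (hL : 0 < L) {q : ℝ} (hq : ∀ z, qrObjUnit L y q ≤ qrObjUnit L y z)
    {c : ℝ} (hc : 2 * (#{n | c < y n} : ℝ) - N ≤ c / L) : q ≤ c := by
  by_contra! hcq
  have hslope : c / L < (q + c) / (2 * L) := by
    rw [div_lt_div_iff₀ hL (by positivity)]
    nlinarith
  have hgain : 0 < (q - c) * ((q + c) / (2 * L) + N - 2 * #{n | c < y n}) :=
    mul_pos (sub_pos.2 hcq) (by linarith)
  linarith [sub_mul_le_qrObjUnit_sub (L := L) y hcq.le, hq c]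

lemma le_qrMinimizer (hL : 0 < L) {q : ℝ} (hq : ∀ z, qrObjUnit L y q ≤ qrObjUnit L y z)
    {c : ℝ} (hc : 2 * (#{n | y n < c} : ℝ) - N ≤ -c / L) : c ≤ q := by
  have hq' : ∀ z, qrObjUnit L (fun n => -y n) (-q) ≤ qrObjUnit L (fun n => -y n) z := by
    intro z
    rw [← neg_neg z, qrObjUnit_neg, qrObjUnit_neg]
    exact hq (-z)
  have hc' : 2 * (#{n | -c < -y n} : ℝ) - N ≤ -c / L := by simpa only [neg_lt_neg_iff] using hc
  linarith [qrMinimizer_le (fun n => -y n) hL hq' hc']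

end Objective

lemma card_filter_le_of_forall_le_not {N N₁ : ℕ} {p : Fin N → Prop} [DecidablePred p]
    (h : ∀ n : Fin N, N₁ ≤ n → ¬ p n) : #{n | p n} ≤ N₁ := by
  calc #{n | p n} ≤ #(range N₁) :=
        card_le_card_of_injOn Fin.val
          (fun n hn => mem_range.2 (not_le.1 fun hle => h n hle (mem_filter.1 hn).2))
          Fin.val_injective.injOn
    _ = N₁ := card_range N₁

/-- QrMed with unit weights is asymptotically correct: if `ξ n → 0`, then for
every `ε > 0` there exists `N₀` such that the quadratically regularized median
of the values `x + ξ n`, `n < N₀`, lies within `ε` of `x`. -/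
theorem qrMed_asymptotically_correct (L : ℝ) (hL : 0 < L)
    (x : ℝ) (ξ : ℕ → ℝ) (hξ : Tendsto ξ atTop (nhds 0)) :
    ∀ ε > 0, ∃ N₀ : ℕ, ∀ q : ℝ,
      (∀ z : ℝ, qrObjUnit L (fun n : Fin N₀ => x + ξ n) q ≤
        qrObjUnit L (fun n : Fin N₀ => x + ξ n) z) →
      |q - x| ≤ ε := by
  intro ε hε
  obtain ⟨N₁, hN₁⟩ := Metric.tendsto_atTop.1 hξ ε hε
  have hsmall : ∀ n ≥ N₁, |ξ n| < ε := fun n hn => Real.dist_0_eq_abs (ξ n) ▸ hN₁ n hn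
  set N₀ := 2 * N₁ + ⌈|x / L|⌉₊
  have hN₀ : 2 * (N₁ : ℝ) - N₀ ≤ -|x / L| := by
    simp only [N₀, Nat.cast_add, Nat.cast_mul, Nat.cast_ofNat]
    linarith [Nat.le_ceil |x / L|]
  have hεL : 0 < ε / L := div_pos hε hL
  refine ⟨N₀, fun q hq => abs_sub_le_iff.2 ⟨?_, ?_⟩⟩
  · have habove : (#{n : Fin N₀ | x + ε < x + ξ n} : ℝ) ≤ N₁ := mod_cast
      card_filter_le_of_forall_le_not fun n hn => by linarith [(abs_lt.1 (hsmall n hn)).2]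
    have := qrMinimizer_le _ hL hq (c := x + ε)
      (by rw [add_div]; linarith [neg_abs_le (x / L)])
    linarith
  · have hbelow : (#{n : Fin N₀ | x + ξ n < x - ε} : ℝ) ≤ N₁ := mod_cast
      card_filter_le_of_forall_le_not fun n hn => by linarith [(abs_lt.1 (hsmall n hn)).1]
    have := le_qrMinimizer _ hL hq (c := x - ε)
      (by rw [neg_div, sub_div]; linarith [le_abs_self (x / L)])
    linarith
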